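/- Let a_1, a_2, a_3, a_4, b be real numbers with 0 ≤ a_1 ≤ a_2 ≤ a_3 ≤ a_4 < 1 and b ≥ 0, and assume a_3 + a_4 ≥ 1 + a_2. If a_2 − a_1 ≥ 0.848, then D(a_1, a_2, a_3, a_4, b) < 0. -/
import Mathlib


/-- The Donaldson–Futaki polynomial for polarizations of `ℙ¹ × ℙ¹`-type on a smooth
del Pezzo surface of degree `4` in the regime `a₃ + a₄ ≥ 1 + a₂`,
with `μ = 2 + b + a₁ + a₂`. -/
noncomputable def Dp1p1deg4a (a1 a2 a3 a4 b : ℝ) : ℝ :=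
  (4 + 2 * b + a1 + a2 + a3 + a4) *
      (-(2 + b + a1 + a2) ^ 3 - 3 * (1 - a1) * (2 + b + a1 + a2) ^ 2 +
        (1 + b + a2) ^ 3 + (1 + a2) ^ 3 + (1 - a3) ^ 3 + (1 - a4) ^ 3) +
    3 * ((2 + b + a1 + a2) ^ 2 + (1 - a1) * (2 + b + a1 + a2)) *
      (4 + 4 * b + 2 * (a1 + a2 + a3 + a4) - a1 ^ 2 - a2 ^ 2 - a3 ^ 2 - a4 ^ 2)

set_option maxRecDepth 8000 in
set_option maxHeartbeats 3200000 in
/-- The constant coefficient (in `b`) of `Dp1p1deg4a`, after the substitution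
`x = a₁`, `p = a₂ - a₁ - 0.848`, `q = a₃ - a₂`, `s = 1 - a₄`, is negative. -/
private lemma Dp1p1deg4a_c0_aux (x p q s : ℝ)
    (hx : 0 ≤ x) (hp : 0 ≤ p) (hq : 0 ≤ q) (hs : 0 ≤ s)
    (hsq : s ≤ q) (hsum : x + p + q + s ≤ 0.152) :
    - (1087006551/244140625) + (4351/125)*s - (513708/15625)*s^2 + (837/125)*s^3 - 1*s^4 - (49369942/1953125)*q + (1083/15625)*q*s + 1*q*s^3 - (467082/15625)*q^2 - (57/125)*q^2*s - (156/25)*q^3 + 1*q^3*s - 1*q^4 - (98739884/1953125)*p + 21*p*s - (2511/125)*p*s^2 + 2*p*s^3 - (1166871/15625)*p*q - (114/125)*p*q*s - (4794/125)*p*q^2 + 3*p*q^2*s - 5*p*q^3 - (1166871/15625)*p^2 - 3*p^2*s^2 - (7191/125)*p^2*q + 3*p^2*q*s - 12*p^2*q^2 - (4794/125)*p^3 - 12*p^3*q - 6*p^4 - (20997996/390625)*x + (4761/125)*x*s - (3954/125)*x*s^2 + 3*x*s^3 - (276024/3125)*x*q - (114/125)*x*q*s - (1236/25)*x*q^2 +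 3*x*q^2*s - 6*x*q^3 - (552048/3125)*x*p + 6*x*p*s - 9*x*p*s^2 - (3558/25)*x*p*q + 6*x*p*q*s - 30*x*p*q^2 - (3558/25)*x*p^2 - 45*x*p^2*q - 30*x*p^3 - (1433286/15625)*x^2 + (57/125)*x^2*s - 6*x^2*s^2 - (9906/125)*x^2*q + 3*x^2*q*s - 18*x^2*q^2 - (19812/125)*x^2*p - 3*x^2*p*s - 51*x^2*p*q - 51*x^2*p^2 - (5892/125)*x^3 - 5*x^3*s - 16*x^3*q - 32*x^3*p - 3*x^4 < 0 := by
  have h1 : (0:ℝ) ≤ 0.076 - s := by linarith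
  nlinarith [hx, hp, hq, hs,
    mul_nonneg hx hx, mul_nonneg hx hp, mul_nonneg hx hq, mul_nonneg hx hs,
    mul_nonneg hp hp, mul_nonneg hp hq, mul_nonneg hp hs,
    mul_nonneg hq hq, mul_nonneg hq hs, mul_nonneg hs hs,
    mul_nonneg hx h1, mul_nonneg hp h1, mul_nonneg hq h1,
    mul_nonneg (mul_nonneg hs hs) h1]

set_option maxHeartbeats 1600000 in
/-- The linear coefficient (in `b`) of `Dp1p1deg4a` is nonpositive. -/
private lemma Dp1p1deg4a_c1_aux (a1 a2 a3 a4 : ℝ)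
    (h0 : 0 ≤ a1) (h12 : a1 ≤ a2) (h23 : a2 ≤ a3) (h34 : a3 ≤ a4) (h4 : a4 < 1)
    (hreg : a3 + a4 ≥ 1 + a2) (hgap : a2 - a1 ≥ 0.848) :
    16 + 3*a4 - 9*a4^2 - 2*a4^3 + 3*a3 - 9*a3^2 - 2*a3^3 + 9*a2 - 6*a2*a4^2 - 6*a2*a3^2
      - 9*a2^2 - 4*a2^3 + 9*a1 - 3*a1*a4^2 - 3*a1*a3^2 - 3*a1*a2^2 + 3*a1^2
      + 3*a1^2*a4 + 3*a1^2*a3 + 3*a1^2*a2 + 4*a1^3 ≤ 0 := by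
  nlinarith [sq_nonneg (a3 - a4), sq_nonneg (a3 + a4 - 1 - a2), mul_nonneg h0 h0,
    sq_nonneg (a2 - a1 - 0.848), mul_nonneg h0 (sub_nonneg.2 h12),
    mul_nonneg (mul_nonneg h0 h0) h0, h4.le, sub_nonneg.2 h23,
    mul_nonneg (sub_nonneg.2 (h12.trans h23)) (sq_nonneg (a3+a4-1-a2))]

/-- The quadratic coefficient (in `b`) of `Dp1p1deg4a` is nonpositive. -/
private lemma Dp1p1deg4a_c2_aux (a1 a2 a3 a4 : ℝ)
    (h0 : 0 ≤ a1) (h12 : a1 ≤ a2) (h23 : a2 ≤ a3) (h34 : a3 ≤ a4) (h4 : a4 < 1)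
    (hreg : a3 + a4 ≥ 1 + a2) (hgap : a2 - a1 ≥ 0.848) :
    6 - 3*a4^2 - 3*a3^2 - 3*a2^2 + 3*a1^2 ≤ 0 := by
  nlinarith [sq_nonneg (a3 - a4), sq_nonneg (a3 + a4 - 1 - a2), mul_nonneg h0 h0,
    sq_nonneg (a2 - a1 - 0.848), mul_nonneg h0 (sub_nonneg.2 h12)]

set_option maxHeartbeats 1600000 in
theorem Dp1p1deg4a_negative (a1 a2 a3 a4 b : ℝ)
    (h0 : 0 ≤ a1) (h12 : a1 ≤ a2) (h23 : a2 ≤ a3) (h34 : a3 ≤ a4) (h4 : a4 < 1)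
    (hb : 0 ≤ b) (hreg : a3 + a4 ≥ 1 + a2)
    (hgap : a2 - a1 ≥ 0.848) :
    Dp1p1deg4a a1 a2 a3 a4 b < 0 := by
  have hc0 := Dp1p1deg4a_c0_aux a1 (a2 - a1 - 0.848) (a3 - a2) (1 - a4) h0
    (by linarith) (by linarith) (by linarith) (by linarith) (by norm_num; linarith)
  have hc1 := Dp1p1deg4a_c1_aux a1 a2 a3 a4 h0 h12 h23 h34 h4 hreg hgap
  have hc2 := Dp1p1deg4a_c2_aux a1 a2 a3 a4 h0 h12 h23 h34 h4 hreg hgap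
  have hb1 : (16 + 3*a4 - 9*a4^2 - 2*a4^3 + 3*a3 - 9*a3^2 - 2*a3^3 + 9*a2 - 6*a2*a4^2
      - 6*a2*a3^2 - 9*a2^2 - 4*a2^3 + 9*a1 - 3*a1*a4^2 - 3*a1*a3^2 - 3*a1*a2^2 + 3*a1^2
      + 3*a1^2*a4 + 3*a1^2*a3 + 3*a1^2*a2 + 4*a1^3) * b ≤ 0 :=
    mul_nonpos_of_nonpos_of_nonneg hc1 hb
  have hb2 : (6 - 3*a4^2 - 3*a3^2 - 3*a2^2 + 3*a1^2) * b^2 ≤ 0 :=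
    mul_nonpos_of_nonpos_of_nonneg hc2 (sq_nonneg b)
  unfold Dp1p1deg4a
  nlinarith [hc0, hb1, hb2]
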